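/- Hedberg-type inequality for Bessel-Riesz operators on generalized Morrey spaces: under the hypotheses 0 < α < n, γ > 0, n/(n+γ-α) < t < n/(n-α), 1 < p₁ < t', -αt'/p₁ ≤ β < -α, and φ(r) ≤ C r^β for all r > 0, there exists C' such that for every f ∈ L^{p₁,φ}(ℝ^n) and every x, |I_{α,γ}f(x)| ≤ C' ‖K_{α,γ}‖_{L^t} ‖f‖_{L^{p₁,φ}}^{-α/β} (Mf(x))^{1+α/β}. -/

import Mathlib

open MeasureTheory Metric ENNReal

noncomputable section

abbrev En (n : ℕ) := EuclideanSpace ℝ (Fin n)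

/-- The Bessel-Riesz kernel `K_{α,γ}(x) = |x|^{α-n}/(1+|x|)^γ`. -/
def brKernel (n : ℕ) (α γ : ℝ) (x : En n) : ℝ :=
  ‖x‖ ^ (α - n) / (1 + ‖x‖) ^ γ

/-- The Bessel-Riesz operator `I_{α,γ} f(x) = ∫ K_{α,γ}(x-y) f(y) dy`. -/
def brOp (n : ℕ) (α γ : ℝ) (f : En n → ℝ) (x : En n) : ℝ :=
  ∫ y, brKernel n α γ (x - y) * f y

/-- The Hardy-Littlewood maximal function (sup over balls containing `x`). -/
def maximalFn (n : ℕ) (f : En n → ℝ) (x : En n) : ℝ≥0∞ :=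
  ⨆ (a : En n) (r : ℝ) (_ : 0 < r) (_ : x ∈ ball a r),
    (volume (ball a r))⁻¹ * ∫⁻ y in ball a r, ENNReal.ofReal |f y|

/-- The classical Morrey norm `‖f‖_{L^{p,q}}`. -/
def morreyNorm (n : ℕ) (p q : ℝ) (f : En n → ℝ) : ℝ≥0∞ :=
  ⨆ (r : ℝ) (_ : 0 < r) (a : En n),
    ENNReal.ofReal (r ^ ((n : ℝ) * (1 / q - 1 / p))) *
      (∫⁻ x in ball a r, ENNReal.ofReal (|f x| ^ p)) ^ (1 / p)

/-- The generalized Morrey norm `‖f‖_{L^{p,φ}}`. -/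
def gMorreyNorm (n : ℕ) (p : ℝ) (φ : ℝ → ℝ) (f : En n → ℝ) : ℝ≥0∞ :=
  ⨆ (r : ℝ) (_ : 0 < r) (a : En n),
    (ENNReal.ofReal (φ r))⁻¹ *
      (((ENNReal.ofReal r) ^ (n : ℝ))⁻¹ *
        ∫⁻ x in ball a r, ENNReal.ofReal (|f x| ^ p)) ^ (1 / p)

/-- The generalized Morrey norm for `ℝ≥0∞`-valued functions. -/
def gMorreyNormE (n : ℕ) (p : ℝ) (φ : ℝ → ℝ) (g : En n → ℝ≥0∞) : ℝ≥0∞ :=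
  ⨆ (r : ℝ) (_ : 0 < r) (a : En n),
    (ENNReal.ofReal (φ r))⁻¹ *
      (((ENNReal.ofReal r) ^ (n : ℝ))⁻¹ * ∫⁻ x in ball a r, (g x) ^ p) ^ (1 / p)

/-!
Hedberg's argument. Split `I_{α,γ} f(x)` into the integrals over `B(x, R)` and its complement and
cut both into dyadic annuli around `x`, on which `K_{α,γ}(x - y) ≤ C |x - y|^{α-n}`. Near `x` each
annulus is controlled by an average of `|f|` over a ball, hence by `Mf(x)`, and the annuli sum to
`C R^α Mf(x)` since `α > 0`. Far from `x`, Hölder's inequality and the Morrey condition bound the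
integral of `|f|` over a ball of radius `s` by `‖f‖ φ(s) s^n ≤ C ‖f‖ s^{n+β}`, so the far annuli sum
to `C ‖f‖ R^{α+β}` since `α + β < 0`. The radius `R = (Mf(x) / ‖f‖)^{1/β}` balances the two terms.
The kernel norm `‖K_{α,γ}‖_{L^t}` is a positive constant and is absorbed into `C'`.
-/

open Set

theorem lintegral_le_lintegral_rpow_mul_measure_univ {X : Type*} [MeasurableSpace X]
    (μ : Measure X) (h : X → ℝ≥0∞) {p q : ℝ} (hpq : p.HolderConjugate q) :
    ∫⁻ x, h x ∂μ ≤ (∫⁻ x, h x ^ p ∂μ) ^ (1 / p) * μ univ ^ (1 / q) := by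
  obtain ⟨g, hg, hgh, hint⟩ := exists_measurable_le_lintegral_eq μ h
  have holder := ENNReal.lintegral_mul_le_Lp_mul_Lq μ hpq hg.aemeasurable
    (aemeasurable_const (b := (1 : ℝ≥0∞)))
  simp only [Pi.mul_apply, mul_one, ENNReal.one_rpow, lintegral_const, one_mul] at holder
  rw [hint]
  refine holder.trans ?_
  gcongr with x
  · exact hpq.one_div_nonneg
  · exact hpq.nonneg
  · exact hgh x

theorem ENNReal.tsum_ofReal_mul_pow_rpow {a b μ : ℝ} (ha : 0 < a) (hb : 0 < b) :
    ∑' j : ℕ, ENNReal.ofReal ((a * b ^ j) ^ μ) =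
      ENNReal.ofReal (a ^ μ) * (1 - ENNReal.ofReal (b ^ μ))⁻¹ := by
  simp_rw [Real.mul_rpow ha.le (pow_nonneg hb.le _), ← Real.rpow_pow_comm hb.le,
    ENNReal.ofReal_mul (Real.rpow_nonneg ha.le _),
    ENNReal.ofReal_pow (Real.rpow_nonneg hb.le _)]
  rw [ENNReal.tsum_mul_left, ENNReal.tsum_geometric]

theorem ENNReal.inv_one_sub_ofReal_ne_top {r : ℝ} (hr : r < 1) : (1 - ENNReal.ofReal r)⁻¹ ≠ ⊤ :=
  ENNReal.inv_ne_top.2 (tsub_pos_of_lt (ENNReal.ofReal_lt_one.2 hr)).ne'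

section Annulus

variable {X : Type*} [MetricSpace X]

-- Closed on both sides, so that dyadic annuli cover whichever way the boundary cases fall.
def closedAnnulus (x : X) (s : ℝ) : Set X := closedBall x s \ ball x (s / 2)

theorem closedAnnulus_subset_ball (x : X) {s : ℝ} (hs : 0 < s) :
    closedAnnulus x s ⊆ ball x (2 * s) :=
  sdiff_subset.trans (closedBall_subset_ball (by linarith))

theorem ball_diff_singleton_subset_iUnion_closedAnnulus (x : X) (R : ℝ) :
    ball x R \ {x} ⊆ ⋃ j : ℕ, closedAnnulus x (R * (1 / 2) ^ j) := by
  rintro y ⟨hyR, hyx⟩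
  have hd : 0 < dist y x := dist_pos.2 hyx
  obtain ⟨j, hj, hj'⟩ := exists_nat_pow_near ((one_le_div hd).2 (mem_ball.1 hyR).le)
    _root_.one_lt_two
  refine mem_iUnion.2 ⟨j, mem_closedBall.2 ?_, fun hy ↦ ?_⟩
  · rw [le_div_iff₀ hd] at hj
    rw [one_div_pow, ← div_eq_mul_one_div, le_div_iff₀ (by positivity)]
    linarith
  · rw [mem_ball, one_div_pow, ← div_eq_mul_one_div, div_div, lt_div_iff₀ (by positivity)] at hy
    rw [div_lt_iff₀ hd, pow_succ] at hj'
    linarith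

theorem compl_ball_subset_iUnion_closedAnnulus (x : X) {R : ℝ} (hR : 0 < R) :
    (ball x R)ᶜ ⊆ ⋃ j : ℕ, closedAnnulus x (R * 2 ^ j) := by
  intro y hy
  have hRd : R ≤ dist y x := not_lt.1 hy
  obtain ⟨j, hj, hj'⟩ := exists_nat_pow_near ((one_le_div hR).2 hRd) _root_.one_lt_two
  rw [le_div_iff₀ hR] at hj
  rw [div_lt_iff₀ hR] at hj'
  refine mem_iUnion.2 ⟨j + 1, mem_closedBall.2 (by linarith), fun hy ↦ ?_⟩
  rw [mem_ball, pow_succ] at hy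
  linarith

end Annulus

section Kernel

variable {n : ℕ} {α γ : ℝ}

theorem brKernel_nonneg (z : En n) : 0 ≤ brKernel n α γ z := by
  unfold brKernel
  positivity

theorem brKernel_pos {z : En n} (hz : z ≠ 0) : 0 < brKernel n α γ z := by
  have := norm_pos_iff.2 hz
  unfold brKernel
  positivity

theorem brKernel_le_rpow (hαn : α ≤ n) (hγ : 0 ≤ γ) {s : ℝ} (hs : 0 < s) {z : En n}
    (hz : s ≤ ‖z‖) : brKernel n α γ z ≤ s ^ (α - n) :=
  calc brKernel n α γ z ≤ ‖z‖ ^ (α - n) :=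
        div_le_self (by positivity) (Real.one_le_rpow (by linarith [norm_nonneg z]) hγ)
    _ ≤ s ^ (α - n) := Real.rpow_le_rpow_of_nonpos hs hz (by linarith)

theorem measurable_brKernel : Measurable (brKernel n α γ) := by
  unfold brKernel
  fun_prop

theorem eLpNorm_brKernel_ne_zero (hn : n ≠ 0) {p : ℝ≥0∞} (hp : p ≠ 0) :
    eLpNorm (brKernel n α γ) p volume ≠ 0 := by
  have : NeZero n := ⟨hn⟩
  rw [Ne, eLpNorm_eq_zero_iff measurable_brKernel.aestronglyMeasurable hp]
  intro hzero
  have hne : ∀ᵐ z : En n, z ≠ 0 := compl_mem_ae_iff.2 (measure_singleton 0)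
  have : ∀ᵐ z : En n, False := by
    filter_upwards [hzero, hne] with z hz h0
    exact (brKernel_pos h0).ne' hz
  exact NeZero.ne (volume : Measure (En n)) (by simpa using this)

end Kernel

section Annuli

variable {n : ℕ} {α γ : ℝ}

theorem half_rpow_mul_two_mul_rpow {s : ℝ} (hs : 0 < s) (μ δ : ℝ) :
    (s / 2) ^ μ * (2 * s) ^ δ = 2 ^ (δ - μ) * s ^ (μ + δ) := by
  rw [Real.div_rpow hs.le zero_le_two, Real.mul_rpow zero_le_two hs.le, Real.rpow_sub two_pos,
    Real.rpow_add hs]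
  field_simp

theorem setLIntegral_closedAnnulus_brKernel_mul_le (hαn : α ≤ n) (hγ : 0 ≤ γ) (x : En n)
    (h : En n → ℝ≥0∞) {c : ℝ≥0∞} {δ : ℝ}
    (hball : ∀ s, 0 < s → ∫⁻ y in ball x s, h y ≤ c * ENNReal.ofReal (s ^ δ)) {s : ℝ}
    (hs : 0 < s) :
    ∫⁻ y in closedAnnulus x s, ENNReal.ofReal (brKernel n α γ (x - y)) * h y ≤
      c * ENNReal.ofReal (2 ^ (δ - (α - n))) * ENNReal.ofReal (s ^ (α - n + δ)) := by
  have hkernel : ∀ y ∈ closedAnnulus x s, brKernel n α γ (x - y) ≤ (s / 2) ^ (α - n) := by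
    refine fun y hy ↦ brKernel_le_rpow hαn hγ (by positivity) ?_
    rw [← dist_eq_norm, dist_comm]
    exact not_lt.1 hy.2
  calc ∫⁻ y in closedAnnulus x s, ENNReal.ofReal (brKernel n α γ (x - y)) * h y
      ≤ ∫⁻ y in closedAnnulus x s, ENNReal.ofReal ((s / 2) ^ (α - n)) * h y :=
        setLIntegral_mono' (measurableSet_closedBall.diff measurableSet_ball)
          fun y hy ↦ by gcongr; exact hkernel y hy
    _ = ENNReal.ofReal ((s / 2) ^ (α - n)) * ∫⁻ y in closedAnnulus x s, h y :=
        lintegral_const_mul' _ _ ENNReal.ofReal_ne_top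
    _ ≤ ENNReal.ofReal ((s / 2) ^ (α - n)) * (c * ENNReal.ofReal ((2 * s) ^ δ)) := by
        gcongr
        exact (lintegral_mono_set (closedAnnulus_subset_ball x hs)).trans
          (hball _ (by positivity))
    _ = c * ENNReal.ofReal (2 ^ (δ - (α - n))) * ENNReal.ofReal (s ^ (α - n + δ)) := by
        rw [mul_left_comm, mul_assoc, ← ENNReal.ofReal_mul (by positivity),
          half_rpow_mul_two_mul_rpow hs, ENNReal.ofReal_mul (by positivity)]

theorem setLIntegral_brKernel_mul_le_of_subset_iUnion (hαn : α ≤ n) (hγ : 0 ≤ γ) (x : En n)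
    (h : En n → ℝ≥0∞) {c : ℝ≥0∞} {δ : ℝ}
    (hball : ∀ s, 0 < s → ∫⁻ y in ball x s, h y ≤ c * ENNReal.ofReal (s ^ δ))
    {S : Set (En n)} {a b : ℝ} (ha : 0 < a) (hb : 0 < b)
    (hS : S ⊆ ⋃ j : ℕ, closedAnnulus x (a * b ^ j)) :
    ∫⁻ y in S, ENNReal.ofReal (brKernel n α γ (x - y)) * h y ≤
      c * ENNReal.ofReal (2 ^ (δ - (α - n))) *
        (ENNReal.ofReal (a ^ (α - n + δ)) * (1 - ENNReal.ofReal (b ^ (α - n + δ)))⁻¹) :=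
  calc ∫⁻ y in S, ENNReal.ofReal (brKernel n α γ (x - y)) * h y
      ≤ ∑' j : ℕ, ∫⁻ y in closedAnnulus x (a * b ^ j),
          ENNReal.ofReal (brKernel n α γ (x - y)) * h y :=
        (lintegral_mono_set hS).trans (lintegral_iUnion_le _ _)
    _ ≤ ∑' j : ℕ, c * ENNReal.ofReal (2 ^ (δ - (α - n))) *
          ENNReal.ofReal ((a * b ^ j) ^ (α - n + δ)) :=
        ENNReal.tsum_le_tsum fun j ↦
          setLIntegral_closedAnnulus_brKernel_mul_le hαn hγ x h hball (by positivity)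
    _ = _ := by rw [ENNReal.tsum_mul_left, ENNReal.tsum_ofReal_mul_pow_rpow ha hb]

end Annuli

section BallAverages

variable {n : ℕ}

theorem volume_ball_eq_ofReal_rpow_mul (x : En n) {r : ℝ} (hr : 0 < r) :
    volume (ball x r) = ENNReal.ofReal (r ^ (n : ℝ)) * volume (ball (0 : En n) 1) := by
  rw [Measure.addHaar_ball_of_pos volume x hr, finrank_euclideanSpace_fin, Real.rpow_natCast]

theorem lintegral_ball_le_maximalFn (f : En n → ℝ) (x : En n) {r : ℝ} (hr : 0 < r) :
    ∫⁻ y in ball x r, ENNReal.ofReal |f y| ≤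
      maximalFn n f x * volume (ball (0 : En n) 1) * ENNReal.ofReal (r ^ (n : ℝ)) := by
  have hvol : volume (ball x r) ≠ 0 := (measure_ball_pos volume x hr).ne'
  have havg : (volume (ball x r))⁻¹ * ∫⁻ y in ball x r, ENNReal.ofReal |f y| ≤
      maximalFn n f x :=
    le_iSup_of_le x (le_iSup₂_of_le r hr (le_iSup_of_le (mem_ball_self hr) le_rfl))
  rw [ENNReal.inv_mul_le_iff hvol measure_ball_lt_top.ne,
    volume_ball_eq_ofReal_rpow_mul x hr] at havg
  calc _ ≤ _ := havg
    _ = _ := by ring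

variable {p : ℝ} {φ : ℝ → ℝ} {f : En n → ℝ}

theorem lintegral_rpow_ball_le_gMorreyNorm (hp : 0 < p) (hf : gMorreyNorm n p φ f ≠ ⊤)
    (a : En n) {r : ℝ} (hr : 0 < r) :
    (∫⁻ y in ball a r, ENNReal.ofReal (|f y| ^ p)) ^ (1 / p) ≤
      gMorreyNorm n p φ f * ENNReal.ofReal (φ r) * ENNReal.ofReal r ^ ((n : ℝ) / p) := by
  set B := ENNReal.ofReal r ^ (n : ℝ)
  set I := ∫⁻ y in ball a r, ENNReal.ofReal (|f y| ^ p)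
  have hB0 : B ≠ 0 := (ENNReal.rpow_pos (ENNReal.ofReal_pos.2 hr) ENNReal.ofReal_ne_top).ne'
  have hBtop : B ≠ ⊤ := ENNReal.rpow_ne_top_of_nonneg n.cast_nonneg ENNReal.ofReal_ne_top
  have hnorm : (B⁻¹ * I) ^ (1 / p) ≤ gMorreyNorm n p φ f * ENNReal.ofReal (φ r) := by
    rw [← ENNReal.div_le_iff_le_mul (.inr hf) (.inl ENNReal.ofReal_ne_top), ENNReal.div_eq_inv_mul]
    exact le_iSup₂_of_le r hr (le_iSup_of_le a le_rfl)
  calc I ^ (1 / p) = (B * (B⁻¹ * I)) ^ (1 / p) := by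
        rw [← mul_assoc, ENNReal.mul_inv_cancel hB0 hBtop, one_mul]
    _ = B ^ (1 / p) * (B⁻¹ * I) ^ (1 / p) := ENNReal.mul_rpow_of_nonneg _ _ (by positivity)
    _ ≤ B ^ (1 / p) * (gMorreyNorm n p φ f * ENNReal.ofReal (φ r)) := by gcongr
    _ = _ := by rw [← ENNReal.rpow_mul, mul_one_div, mul_comm]

theorem lintegral_ball_le_gMorreyNorm {q : ℝ} (hpq : p.HolderConjugate q)
    (hf : gMorreyNorm n p φ f ≠ ⊤) (a : En n) {r : ℝ} (hr : 0 < r) :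
    ∫⁻ y in ball a r, ENNReal.ofReal |f y| ≤
      gMorreyNorm n p φ f * ENNReal.ofReal (φ r) * volume (ball (0 : En n) 1) ^ (1 / q) *
        ENNReal.ofReal (r ^ (n : ℝ)) := by
  have holder := lintegral_le_lintegral_rpow_mul_measure_univ (volume.restrict (ball a r))
    (fun y ↦ ENNReal.ofReal |f y|) hpq
  simp only [Measure.restrict_apply_univ,
    ENNReal.ofReal_rpow_of_nonneg (abs_nonneg _) hpq.nonneg] at holder
  have hr' : ENNReal.ofReal r ≠ 0 := (ENNReal.ofReal_pos.2 hr).ne'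
  have hsplit : ENNReal.ofReal r ^ ((n : ℝ) / p) * ENNReal.ofReal r ^ ((n : ℝ) * (1 / q)) =
      ENNReal.ofReal (r ^ (n : ℝ)) := by
    rw [← ENNReal.rpow_add _ _ hr' ENNReal.ofReal_ne_top, ENNReal.ofReal_rpow_of_pos hr,
      div_eq_mul_one_div, ← mul_add, hpq.one_div_add_one_div, div_one, mul_one]
  calc _ ≤ _ := holder
    _ ≤ gMorreyNorm n p φ f * ENNReal.ofReal (φ r) * ENNReal.ofReal r ^ ((n : ℝ) / p) *
          (ENNReal.ofReal r ^ (n : ℝ) * volume (ball (0 : En n) 1)) ^ (1 / q) := by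
        rw [volume_ball_eq_ofReal_rpow_mul a hr, ← ENNReal.ofReal_rpow_of_pos hr]
        gcongr
        exact lintegral_rpow_ball_le_gMorreyNorm hpq.pos hf a hr
    _ = _ := by
        rw [ENNReal.mul_rpow_of_nonneg _ _ hpq.symm.one_div_nonneg, ← ENNReal.rpow_mul, ← hsplit]
        ring

end BallAverages

section Hedberg

variable {n : ℕ} {α γ : ℝ}

theorem ofReal_abs_brOp_le_lintegral (f : En n → ℝ) (x : En n) :
    ENNReal.ofReal |brOp n α γ f x| ≤
      ∫⁻ y, ENNReal.ofReal (brKernel n α γ (x - y)) * ENNReal.ofReal |f y| := by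
  rw [brOp, ← Real.enorm_eq_ofReal_abs]
  refine (enorm_integral_le_lintegral_enorm _).trans_eq (lintegral_congr fun y ↦ ?_)
  rw [enorm_mul, Real.enorm_of_nonneg (brKernel_nonneg _), Real.enorm_eq_ofReal_abs]

theorem exists_setLIntegral_ball_brKernel_mul_le (hα0 : 0 < α) (hαn : α < n) (hγ : 0 ≤ γ) :
    ∃ A : ℝ≥0∞, A ≠ ⊤ ∧ ∀ (f : En n → ℝ) (x : En n) (R : ℝ), 0 < R →
      ∫⁻ y in ball x R, ENNReal.ofReal (brKernel n α γ (x - y)) * ENNReal.ofReal |f y| ≤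
        A * ENNReal.ofReal (R ^ α) * maximalFn n f x := by
  have : NeZero n := ⟨(Nat.cast_pos.1 (hα0.trans hαn)).ne'⟩
  have hratio : (1 / 2 : ℝ) ^ α < 1 := Real.rpow_lt_one (by norm_num) (by norm_num) hα0
  refine ⟨volume (ball (0 : En n) 1) * ENNReal.ofReal (2 ^ ((n : ℝ) - (α - n))) *
      (1 - ENNReal.ofReal ((1 / 2 : ℝ) ^ α))⁻¹, ?_, fun f x R hR ↦ ?_⟩
  · exact ENNReal.mul_ne_top (ENNReal.mul_ne_top measure_ball_lt_top.ne ENNReal.ofReal_ne_top)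
      (ENNReal.inv_one_sub_ofReal_ne_top hratio)
  have hsum := setLIntegral_brKernel_mul_le_of_subset_iUnion hαn.le hγ x _
    (fun s hs ↦ lintegral_ball_le_maximalFn f x hs) hR one_half_pos
    (ball_diff_singleton_subset_iUnion_closedAnnulus x R)
  rw [sub_add_cancel, setLIntegral_congr (sdiff_null_ae_eq_self (measure_singleton x))] at hsum
  calc _ ≤ _ := hsum
    _ = _ := by ring

variable {p β Cφ : ℝ} {φ : ℝ → ℝ}

theorem exists_setLIntegral_compl_ball_brKernel_mul_le (hαn : α ≤ n) (hγ : 0 ≤ γ) (hp : 1 < p)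
    (hαβ : α + β < 0) (hφ : ∀ r, 0 < r → φ r ≤ Cφ * r ^ β) :
    ∃ B : ℝ≥0∞, B ≠ ⊤ ∧ ∀ f : En n → ℝ, gMorreyNorm n p φ f ≠ ⊤ → ∀ (x : En n) (R : ℝ), 0 < R →
      ∫⁻ y in (ball x R)ᶜ, ENNReal.ofReal (brKernel n α γ (x - y)) * ENNReal.ofReal |f y| ≤
        B * gMorreyNorm n p φ f * ENNReal.ofReal (R ^ (α + β)) := by
  set q := p.conjExponent
  have hpq : p.HolderConjugate q := .conjExponent hp
  have hratio : (2 : ℝ) ^ (α + β) < 1 := Real.rpow_lt_one_of_one_lt_of_neg one_lt_two hαβ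
  refine ⟨ENNReal.ofReal Cφ * volume (ball (0 : En n) 1) ^ (1 / q) *
      ENNReal.ofReal (2 ^ ((n : ℝ) + β - (α - n))) * (1 - ENNReal.ofReal ((2 : ℝ) ^ (α + β)))⁻¹,
    ?_, fun f hf x R hR ↦ ?_⟩
  · have hV : volume (ball (0 : En n) 1) ^ (1 / q) ≠ ⊤ :=
      ENNReal.rpow_ne_top_of_nonneg hpq.symm.one_div_nonneg measure_ball_lt_top.ne
    exact ENNReal.mul_ne_top (ENNReal.mul_ne_top (ENNReal.mul_ne_top ENNReal.ofReal_ne_top hV)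
      ENNReal.ofReal_ne_top) (ENNReal.inv_one_sub_ofReal_ne_top hratio)
  have hball : ∀ s, 0 < s → ∫⁻ y in ball x s, ENNReal.ofReal |f y| ≤
      gMorreyNorm n p φ f * ENNReal.ofReal Cφ * volume (ball (0 : En n) 1) ^ (1 / q) *
        ENNReal.ofReal (s ^ ((n : ℝ) + β)) := by
    intro s hs
    refine (lintegral_ball_le_gMorreyNorm hpq hf x hs).trans ?_
    calc _ ≤ gMorreyNorm n p φ f * ENNReal.ofReal (Cφ * s ^ β) *
          volume (ball (0 : En n) 1) ^ (1 / q) * ENNReal.ofReal (s ^ (n : ℝ)) := by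
          gcongr
          exact hφ s hs
      _ = _ := by
          rw [Real.rpow_add hs, ENNReal.ofReal_mul' (by positivity),
            ENNReal.ofReal_mul (by positivity)]
          ring
  have hsum := setLIntegral_brKernel_mul_le_of_subset_iUnion hαn hγ x _ hball hR two_pos
    (compl_ball_subset_iUnion_closedAnnulus x hR)
  rw [show α - n + (n + β) = α + β by ring] at hsum
  calc _ ≤ _ := hsum
    _ = _ := by ring

theorem exists_ofReal_abs_brOp_le (hα0 : 0 < α) (hαn : α < n) (hγ : 0 ≤ γ) (hp : 1 < p)
    (hαβ : α + β < 0) (hφ : ∀ r, 0 < r → φ r ≤ Cφ * r ^ β) :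
    ∃ A B : ℝ≥0∞, A ≠ ⊤ ∧ B ≠ ⊤ ∧ ∀ f : En n → ℝ, gMorreyNorm n p φ f ≠ ⊤ →
      ∀ (x : En n) (R : ℝ), 0 < R → ENNReal.ofReal |brOp n α γ f x| ≤
        A * ENNReal.ofReal (R ^ α) * maximalFn n f x +
          B * gMorreyNorm n p φ f * ENNReal.ofReal (R ^ (α + β)) := by
  obtain ⟨A, hA, hnear⟩ := exists_setLIntegral_ball_brKernel_mul_le (γ := γ) hα0 hαn hγ
  obtain ⟨B, hB, hfar⟩ :=
    exists_setLIntegral_compl_ball_brKernel_mul_le (γ := γ) hαn.le hγ hp hαβ hφ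
  refine ⟨A, B, hA, hB, fun f hf x R hR ↦ ?_⟩
  calc _ ≤ _ := ofReal_abs_brOp_le_lintegral f x
    _ = _ := (lintegral_add_compl _ (measurableSet_ball (x := x) (ε := R))).symm
    _ ≤ _ := add_le_add (hnear f x R hR) (hfar f hf x R hR)

end Hedberg

theorem le_rpow_mul_rpow_of_forall_le {X A B M N : ℝ≥0∞} {α β : ℝ} (hβ : β ≠ 0)
    (hM0 : M ≠ 0) (hM : M ≠ ⊤) (hN0 : N ≠ 0) (hN : N ≠ ⊤)
    (h : ∀ R : ℝ, 0 < R →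
      X ≤ A * ENNReal.ofReal (R ^ α) * M + B * N * ENNReal.ofReal (R ^ (α + β))) :
    X ≤ (A + B) * N ^ (-α / β) * M ^ (1 + α / β) := by
  have hm : 0 < M.toReal := ENNReal.toReal_pos hM0 hM
  have hν : 0 < N.toReal := ENNReal.toReal_pos hN0 hN
  set R := (M.toReal / N.toReal) ^ (1 / β)
  set P := N.toReal ^ (-α / β) * M.toReal ^ (1 + α / β)
  -- this choice of `R` balances the two terms; compare logarithms
  have hbalance : R ^ α * M.toReal = P ∧ N.toReal * R ^ (α + β) = P := by
    constructor <;> refine Real.log_injOn_pos (Set.mem_Ioi.2 (by positivity))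
      (Set.mem_Ioi.2 (by positivity)) ?_ <;>
    rw [Real.log_mul (by positivity) (by positivity), Real.log_mul (by positivity) (by positivity),
      Real.log_rpow (by positivity), Real.log_rpow (by positivity), Real.log_rpow (by positivity),
      Real.log_rpow (by positivity), Real.log_div hm.ne' hν.ne'] <;>
    field_simp <;> ring
  calc X ≤ A * ENNReal.ofReal (R ^ α) * M + B * N * ENNReal.ofReal (R ^ (α + β)) :=
        h R (by positivity)
    _ = A * ENNReal.ofReal (R ^ α * M.toReal) + B * ENNReal.ofReal (N.toReal * R ^ (α + β)) := by
        rw [ENNReal.ofReal_mul (by positivity), ENNReal.ofReal_mul hν.le,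
          ENNReal.ofReal_toReal hM, ENNReal.ofReal_toReal hN]
        ring
    _ = (A + B) * ENNReal.ofReal P := by rw [hbalance.1, hbalance.2, add_mul]
    _ = _ := by
        rw [ENNReal.ofReal_mul (by positivity), ← ENNReal.ofReal_rpow_of_pos hν,
          ← ENNReal.ofReal_rpow_of_pos hm, ENNReal.ofReal_toReal hM, ENNReal.ofReal_toReal hN,
          mul_assoc]

theorem exists_le_ofReal_mul {D e : ℝ≥0∞} (hD : D ≠ ⊤) (he : e ≠ 0) :
    ∃ C > (0 : ℝ), D ≤ ENNReal.ofReal C * e := by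
  refine ⟨D.toReal / e.toReal + 1, by positivity, ?_⟩
  rcases eq_or_ne e ⊤ with rfl | he'
  · rw [ENNReal.mul_top (ENNReal.ofReal_pos.2 (by positivity)).ne']
    exact le_top
  calc D = ENNReal.ofReal (D.toReal / e.toReal * e.toReal) := by
        rw [div_mul_cancel₀ _ (ENNReal.toReal_pos he he').ne', ENNReal.ofReal_toReal hD]
    _ = ENNReal.ofReal (D.toReal / e.toReal) * e := by
        rw [ENNReal.ofReal_mul (by positivity), ENNReal.ofReal_toReal he']
    _ ≤ _ := by gcongr; linarith

theorem besselRiesz_hedberg_general (n : ℕ) (α γ t p₁ β Cφ : ℝ) (φ : ℝ → ℝ)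
    (hα0 : 0 < α) (hαn : α < n) (hγ : 0 < γ)
    (ht1 : (n : ℝ) / ((n : ℝ) + γ - α) < t) (hp1 : 1 < p₁) (hβ2 : β < -α)
    (hφ : ∀ r, 0 < r → φ r ≤ Cφ * r ^ β) :
    ∃ C' > (0 : ℝ), ∀ f : En n → ℝ, ∀ x : En n,
      gMorreyNorm n p₁ φ f < ⊤ → 0 < gMorreyNorm n p₁ φ f → 0 < maximalFn n f x →
        ENNReal.ofReal |brOp n α γ f x| ≤
          ENNReal.ofReal C' * eLpNorm (brKernel n α γ) (ENNReal.ofReal t) volume *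
            (gMorreyNorm n p₁ φ f) ^ (-α / β) * (maximalFn n f x) ^ (1 + α / β) := by
  have hn : (0 : ℝ) < n := hα0.trans hαn
  have ht : 0 < t := (div_pos hn (by linarith)).trans ht1
  have hβ : β < 0 := by linarith
  have hexp : 0 < 1 + α / β := by
    rw [one_add_div hβ.ne]
    exact div_pos_of_neg_of_neg (by linarith) hβ
  have he : eLpNorm (brKernel n α γ) (ENNReal.ofReal t) volume ≠ 0 :=
    eLpNorm_brKernel_ne_zero (Nat.cast_pos.1 hn).ne' (ENNReal.ofReal_pos.2 ht).ne'
  obtain ⟨A, B, hA, hB, hsplit⟩ := exists_ofReal_abs_brOp_le hα0 hαn hγ.le hp1 (by linarith) hφ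
  obtain ⟨C', hC', hABC⟩ := exists_le_ofReal_mul (ENNReal.add_ne_top.2 ⟨hA, hB⟩) he
  refine ⟨C', hC', fun f x hN hN0 hM0 ↦ ?_⟩
  rcases eq_or_ne (maximalFn n f x) ⊤ with hM | hM
  · rw [hM, ENNReal.top_rpow_of_pos hexp, ENNReal.mul_top]
    · exact le_top
    · exact mul_ne_zero (mul_ne_zero (ENNReal.ofReal_pos.2 hC').ne' he)
        (ENNReal.rpow_pos hN0 hN.ne).ne'
  calc _ ≤ (A + B) * gMorreyNorm n p₁ φ f ^ (-α / β) * maximalFn n f x ^ (1 + α / β) :=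
        le_rpow_mul_rpow_of_forall_le hβ.ne hM0.ne' hM hN0.ne' hN.ne (hsplit f hN.ne x)
    _ ≤ _ := by gcongr

/-- Hedberg-type inequality for the Bessel-Riesz operator with
the Lebesgue norm of the kernel. -/
theorem besselRiesz_hedberg (n : ℕ) (hn : 1 ≤ n) (α γ t p₁ β Cφ : ℝ) (φ : ℝ → ℝ)
    (hα0 : 0 < α) (hαn : α < n) (hγ : 0 < γ)
    (ht1 : (n : ℝ) / ((n : ℝ) + γ - α) < t) (ht2 : t < (n : ℝ) / ((n : ℝ) - α))
    (hp1 : 1 < p₁) (hp2 : p₁ < t / (t - 1))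
    (hβ1 : -α * (t / (t - 1)) / p₁ ≤ β) (hβ2 : β < -α)
    (hCφ : 0 < Cφ) (hφ : ∀ r, 0 < r → φ r ≤ Cφ * r ^ β) :
    ∃ C' > (0 : ℝ), ∀ f : En n → ℝ, ∀ x : En n,
      gMorreyNorm n p₁ φ f < ⊤ → 0 < gMorreyNorm n p₁ φ f → 0 < maximalFn n f x →
        ENNReal.ofReal |brOp n α γ f x| ≤
          ENNReal.ofReal C' * eLpNorm (brKernel n α γ) (ENNReal.ofReal t) volume *
            (gMorreyNorm n p₁ φ f) ^ (-α / β) * (maximalFn n f x) ^ (1 + α / β) :=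
  besselRiesz_hedberg_general n α γ t p₁ β Cφ φ hα0 hαn hγ ht1 hp1 hβ2 hφ
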